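/- Every graph G with at least 3 vertices whose independence number α(G) is at most its vertex connectivity κ(G) contains a Hamiltonian cycle (Chvátal–Erdős theorem). -/

import Mathlib

/-- The independence number of `G`: the largest size of an independent set,
i.e. the clique number of the complement. -/
noncomputable def indepNum {V : Type*} (G : SimpleGraph V) : ℕ := Gᶜ.cliqueNum

/-- The vertex connectivity of `G`: the least number of vertices whose removal leaves a
graph that is disconnected or has fewer than two vertices. -/
noncomputable def vertexConnectivity {V : Type*} [Fintype V] [DecidableEq V]
    (G : SimpleGraph V) : ℕ :=
  sInf {k | ∃ S : Finset V, S.card = k ∧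
    (¬ (G.induce ((↑S : Set V)ᶜ)).Connected ∨ Sᶜ.card ≤ 1)}

/-!
Take a longest cycle `C` and suppose a vertex `v` lies off it. Let `N` be the set of vertices of
`C` adjacent to the component of `G - C` containing `v`, and `u⁺` the successor of `u` on `C`.
Maximality of `C` forbids `u⁺ ∈ N` for `u ∈ N` (route `u ⟶ u⁺` through the component) and an edge
`u⁺ u'⁺` for distinct `u, u' ∈ N` (route `u ⟶ u'` through the component and rotate). So
`{v} ∪ N⁺` is independent, whence `|N| < α(G) ≤ κ(G)`; yet `N` separates `v` from `C - N`.
A first cycle exists because a tree on at least three vertices has a leaf, and cutting off the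
neighbour of a leaf `v` gives `κ(G) ≤ 1 < 2 ≤ α(G)`.
-/

namespace SimpleGraph

variable {V : Type*} {G : SimpleGraph V}

namespace Walk

lemma mem_support_tail_iff_of_not_nil {a w : V} {c : G.Walk a a} (hc : ¬ c.Nil) :
    w ∈ c.support.tail ↔ w ∈ c.support := by
  refine ⟨List.mem_of_mem_tail, fun hw => ?_⟩
  rcases (mem_support_iff c).mp hw with rfl | hw
  · exact end_mem_tail_support hc
  · exact hw

lemma IsPath.start_notMem_support_tail {u w : V} {p : G.Walk u w} (hp : p.IsPath) :
    u ∉ p.support.tail := by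
  have := hp.support_nodup
  rw [← cons_tail_support] at this
  exact (List.nodup_cons.mp this).1

lemma IsCycle.length_le_card [Fintype V] {a : V} {c : G.Walk a a} (hc : c.IsCycle) :
    c.length ≤ Fintype.card V := by
  have := hc.isPath_tail.length_lt
  rw [← length_tail_add_one hc.not_nil]
  omega

lemma IsPath.isCycle_append_of_support {K : Set V} {u w : V} {p : G.Walk u w}
    {q : G.Walk w u} (hp : p.IsPath) (hq : q.IsPath) (hp₁ : 1 < p.length)
    (hpK : ∀ z ∈ p.support, z ∈ K → z = u ∨ z = w) (hqK : ∀ z ∈ q.support, z ∈ K) :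
    (p.append q).IsCycle := by
  refine hp.isCycle_append hq (fun z hzp hzq => ?_) (Or.inl hp₁)
  rcases hpK z (List.mem_of_mem_tail hzp) (hqK z (List.mem_of_mem_tail hzq)) with rfl | rfl
  · exact hp.start_notMem_support_tail hzp
  · exact hq.start_notMem_support_tail hzq

variable [DecidableEq V]

lemma IsCycle.isHamiltonianCycle_of_forall_mem {a : V} {c : G.Walk a a} (hc : c.IsCycle)
    (h : ∀ w, w ∈ c.support) : c.IsHamiltonianCycle := by
  rw [isHamiltonianCycle_isCycle_and_isHamiltonian_tail]
  refine ⟨hc, hc.isPath_tail.isHamiltonian_of_mem fun w => ?_⟩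
  rw [support_tail_of_not_nil _ hc.not_nil, mem_support_tail_iff_of_not_nil hc.not_nil]
  exact h w

/-- Pósa rotation: the path `z ⟶ x ~ z⁺ ⟶ y`, where `z⁺` follows `z` on `p`. -/
lemma IsPath.exists_posa_rotation {x y z : V} {p : G.Walk x y} (hp : p.IsPath)
    (hz : z ∈ p.support) (hzy : z ≠ y) (h : G.Adj x (p.dropUntil z hz).snd) :
    ∃ q : G.Walk z y, q.IsPath ∧ q.length = p.length ∧ ∀ w ∈ q.support, w ∈ p.support := by
  set p₁ := p.takeUntil z hz
  set p₂ := p.dropUntil z hz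
  have hp₂ : ¬ p₂.Nil := not_nil_of_ne hzy
  have hspec : p₁.append p₂ = p := take_spec p hz
  have hperm : (p₁.reverse.append (cons h p₂.tail)).support.Perm p.support := by
    rw [← hspec, support_append, support_append, support_reverse, support_cons,
      List.tail_cons, support_tail_of_not_nil _ hp₂]
    exact (List.reverse_perm _).append_right _
  refine ⟨p₁.reverse.append (cons h p₂.tail), ?_, ?_, fun w => hperm.mem_iff.mp⟩
  · exact IsPath.mk' (hperm.nodup_iff.mpr hp.support_nodup)
  · rw [← hspec, length_append, length_append, length_reverse, length_cons,
      length_tail_add_one hp₂]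

/-- The vertex following `u` on `c`; junk value `u` when `u` is not on `c`. -/
noncomputable def nextVert {a : V} (c : G.Walk a a) (u : V) : V :=
  if hu : u ∈ c.support then (c.rotate u hu).snd else u

variable {a u : V} {c : G.Walk a a}

lemma snd_rotate (c : G.Walk a a) (hu : u ∈ c.support) : (c.rotate u hu).snd = c.nextVert u := by
  rw [nextVert, dif_pos hu]

lemma exists_mem_darts_fst_eq (hc : ¬ c.Nil) (hu : u ∈ c.support) :
    ∃ d ∈ c.darts, d.fst = u :=
  ⟨_, (rotate_darts c u hu).perm.mem_iff.mp (firstDart_mem_darts (by simpa using hc)), rfl⟩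

lemma IsCycle.nextVert_eq_of_mem_darts (hc : c.IsCycle) {d : G.Dart} (hd : d ∈ c.darts) :
    c.nextVert d.fst = d.snd := by
  have hu := c.dart_fst_mem_support_of_mem_darts hd
  have hR : ¬ (c.rotate _ hu).Nil := by simpa using hc.not_nil
  have hmem := (rotate_darts c _ hu).perm.mem_iff.mp (firstDart_mem_darts hR)
  have hnd : (c.darts.map (·.fst)).Nodup := by
    rw [map_fst_darts]
    exact hc.nodup_dropLast_support
  rw [← snd_rotate c hu]
  exact congrArg (·.snd) (List.inj_on_of_nodup_map hnd hmem hd rfl)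

lemma IsCycle.adj_nextVert (hc : c.IsCycle) (hu : u ∈ c.support) : G.Adj u (c.nextVert u) := by
  obtain ⟨d, hd, rfl⟩ := exists_mem_darts_fst_eq hc.not_nil hu
  rw [hc.nextVert_eq_of_mem_darts hd]
  exact d.adj

lemma IsCycle.nextVert_mem_support (hc : c.IsCycle) (hu : u ∈ c.support) :
    c.nextVert u ∈ c.support := by
  obtain ⟨d, hd, rfl⟩ := exists_mem_darts_fst_eq hc.not_nil hu
  rw [hc.nextVert_eq_of_mem_darts hd]
  exact c.dart_snd_mem_support_of_mem_darts hd

lemma IsCycle.injOn_nextVert (hc : c.IsCycle) : Set.InjOn c.nextVert {u | u ∈ c.support} := by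
  intro u hu u' hu' h
  obtain ⟨d, hd, rfl⟩ := exists_mem_darts_fst_eq hc.not_nil hu
  obtain ⟨d', hd', rfl⟩ := exists_mem_darts_fst_eq hc.not_nil hu'
  have hnd : (c.darts.map (·.snd)).Nodup := by
    rw [map_snd_darts]
    exact hc.support_nodup
  rw [hc.nextVert_eq_of_mem_darts hd, hc.nextVert_eq_of_mem_darts hd'] at h
  rw [List.inj_on_of_nodup_map hnd hd hd' h]

lemma IsCycle.exists_isPath_nextVert (hc : c.IsCycle) (hu : u ∈ c.support) :
    ∃ q : G.Walk (c.nextVert u) u, q.IsPath ∧ q.length + 1 = c.length ∧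
      (∀ w, w ∈ q.support ↔ w ∈ c.support) ∧ q.darts ⊆ c.darts := by
  have hR := hc.rotate hu
  refine ⟨(c.rotate u hu).tail.copy (snd_rotate c hu) rfl, ?_, ?_, fun w => ?_, ?_⟩
  · rw [isPath_copy]
    exact hR.isPath_tail
  · rw [length_copy, length_tail_add_one hR.not_nil, length_rotate]
  · rw [support_copy, support_tail_of_not_nil _ hR.not_nil, (support_rotate c u hu).perm.mem_iff,
      mem_support_tail_iff_of_not_nil hc.not_nil]
  · rw [darts_copy, darts_tail]
    exact fun d hd => (rotate_darts c u hu).perm.mem_iff.mp (List.mem_of_mem_tail hd)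

end Walk

variable (G) in
def reachAvoiding (K : Set V) (v : V) : Set V :=
  {w | ∃ p : G.Walk v w, ∀ x ∈ p.support, x ∉ K}

variable (G) in
/-- The attachment vertices on `K` of the `K`-bridge containing `v`. -/
def attachments (K : Set V) (v : V) : Set V :=
  {u | u ∈ K ∧ ∃ b ∈ G.reachAvoiding K v, G.Adj b u}

variable {K : Set V} {v : V}

lemma mem_reachAvoiding_self (hv : v ∉ K) : v ∈ G.reachAvoiding K v :=
  ⟨Walk.nil, by simpa using hv⟩

lemma mem_reachAvoiding_of_adj {b c : V} (hb : b ∈ G.reachAvoiding K v) (h : G.Adj b c)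
    (hc : c ∉ K) : c ∈ G.reachAvoiding K v := by
  obtain ⟨p, hp⟩ := hb
  refine ⟨p.concat h, fun x hx => ?_⟩
  rw [Walk.support_concat, List.mem_append, List.mem_singleton] at hx
  rcases hx with hx | rfl
  exacts [hp x hx, hc]

lemma exists_mem_support_mem_attachments {b w : V} (p : G.Walk b w)
    (hb : b ∈ G.reachAvoiding K v) (hw : w ∈ K) : ∃ x ∈ p.support, x ∈ G.attachments K v := by
  induction p with
  | nil =>
    obtain ⟨q, hq⟩ := hb
    exact absurd hw (hq _ q.end_mem_support)
  | @cons b c w h p ih =>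
    by_cases hc : c ∈ K
    · exact ⟨c, by simp, hc, b, hb, h⟩
    · obtain ⟨x, hx, hxN⟩ := ih (mem_reachAvoiding_of_adj hb h hc) hw
      exact ⟨x, List.mem_cons_of_mem _ hx, hxN⟩

lemma exists_isPath_of_mem_attachments {u w : V} (hu : u ∈ G.attachments K v)
    (hw : w ∈ G.attachments K v) (huw : u ≠ w) :
    ∃ p : G.Walk u w, p.IsPath ∧ 1 < p.length ∧ ∀ z ∈ p.support, z ∈ K → z = u ∨ z = w := by
  classical
  obtain ⟨huK, b₁, ⟨p₁, hp₁⟩, h₁⟩ := hu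
  obtain ⟨hwK, b₂, ⟨p₂, hp₂⟩, h₂⟩ := hw
  set q := (p₁.reverse.append p₂).bypass
  have hqK : ∀ x ∈ q.support, x ∉ K := by
    intro x hx
    rcases (Walk.mem_support_append_iff _ _).mp (Walk.support_bypass_subset_support _ hx)
      with hx | hx
    · exact hp₁ x (by simpa using hx)
    · exact hp₂ x hx
  refine ⟨Walk.cons h₁.symm (q.concat h₂),
    ((Walk.bypass_isPath _).concat (fun h => hqK w h hwK) h₂).cons ?_, by simp, ?_⟩
  · simp only [Walk.support_concat, List.mem_append, List.mem_singleton, not_or]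
    exact ⟨fun h => hqK u h huK, huw⟩
  · intro z hz hzK
    rw [Walk.support_cons, Walk.support_concat, List.mem_cons, List.mem_append,
      List.mem_singleton] at hz
    rcases hz with rfl | hz | rfl
    exacts [Or.inl rfl, absurd hzK (hqK z hz), Or.inr rfl]

lemma not_connected_induce_compl_attachments {w : V} (hv : v ∉ K) (hw : w ∈ K)
    (hwN : w ∉ G.attachments K v) : ¬ (G.induce (G.attachments K v)ᶜ).Connected := by
  intro hconn
  obtain ⟨p⟩ := hconn.preconnected ⟨v, fun h => hv h.1⟩ ⟨w, hwN⟩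
  obtain ⟨x, hx, hxN⟩ := exists_mem_support_mem_attachments
    (p.map (Embedding.induce _).toHom) (mem_reachAvoiding_self hv) hw
  rw [Walk.support_map, List.mem_map] at hx
  obtain ⟨x, -, rfl⟩ := hx
  exact x.2 hxN

variable {a : V} {c : G.Walk a a}

lemma exists_longer_isCycle_of_mem_attachments {u w : V}
    (hu : u ∈ G.attachments {x | x ∈ c.support} v) (hw : w ∈ G.attachments {x | x ∈ c.support} v)
    (huw : u ≠ w) {q : G.Walk w u} (hq : q.IsPath) (hqc : ∀ z ∈ q.support, z ∈ c.support)
    (hlen : c.length ≤ q.length + 1) :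
    ∃ (b : V) (c' : G.Walk b b), c'.IsCycle ∧ c.length < c'.length := by
  obtain ⟨p, hp, hp₁, hpc⟩ := exists_isPath_of_mem_attachments hu hw huw
  refine ⟨u, p.append q, hp.isCycle_append_of_support hq hp₁ hpc hqc, ?_⟩
  rw [Walk.length_append]
  omega

lemma exists_isCycle_forall_length_le [Fintype V] (h : ∃ (a : V) (c : G.Walk a a), c.IsCycle) :
    ∃ (a : V) (c : G.Walk a a), c.IsCycle ∧
      ∀ (b : V) (c' : G.Walk b b), c'.IsCycle → c'.length ≤ c.length := by
  let s := {n | ∃ (a : V) (c : G.Walk a a), c.IsCycle ∧ c.length = n}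
  have hs : s.Finite := (Set.finite_le_nat (Fintype.card V)).subset
    fun n ⟨_, _, hc, hn⟩ => hn ▸ hc.length_le_card
  obtain ⟨a, c, hc⟩ := h
  obtain ⟨a, c, hc, hlen⟩ := Nat.sSup_mem (show s.Nonempty from ⟨_, a, c, hc, rfl⟩) hs.bddAbove
  exact ⟨a, c, hc, fun b c' hc' => hlen ▸ le_csSup hs.bddAbove ⟨b, c', hc', rfl⟩⟩

variable [DecidableEq V]

lemma Walk.IsCycle.exists_longer_of_nextVert_mem_attachments (hc : c.IsCycle) {u : V}
    (hu : u ∈ G.attachments {x | x ∈ c.support} v)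
    (hu' : c.nextVert u ∈ G.attachments {x | x ∈ c.support} v) :
    ∃ (b : V) (c' : G.Walk b b), c'.IsCycle ∧ c.length < c'.length := by
  obtain ⟨q, hq, hqlen, hqc, -⟩ := hc.exists_isPath_nextVert hu.1
  exact exists_longer_isCycle_of_mem_attachments hu hu' (hc.adj_nextVert hu.1).ne hq
    (fun z hz => (hqc z).mp hz) hqlen.ge

lemma Walk.IsCycle.exists_longer_of_adj_nextVert (hc : c.IsCycle) {u u' : V}
    (hu : u ∈ G.attachments {x | x ∈ c.support} v)
    (hu' : u' ∈ G.attachments {x | x ∈ c.support} v) (huu' : u ≠ u')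
    (hadj : G.Adj (c.nextVert u) (c.nextVert u')) :
    ∃ (b : V) (c' : G.Walk b b), c'.IsCycle ∧ c.length < c'.length := by
  obtain ⟨q, hq, hqlen, hqc, hqd⟩ := hc.exists_isPath_nextVert hu.1
  have hu'q : u' ∈ q.support := (hqc u').mpr hu'.1
  have hne : ¬ (q.dropUntil u' hu'q).Nil := Walk.not_nil_of_ne huu'.symm
  have hsnd : (q.dropUntil u' hu'q).snd = c.nextVert u' := (hc.nextVert_eq_of_mem_darts
    (hqd (q.darts_dropUntil_subset_darts hu'q (Walk.firstDart_mem_darts hne)))).symm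
  obtain ⟨r, hr, hrlen, hrq⟩ := hq.exists_posa_rotation hu'q huu'.symm (hsnd ▸ hadj)
  exact exists_longer_isCycle_of_mem_attachments hu hu' huu' hr
    (fun z hz => (hqc z).mp (hrq z hz)) (by omega)

end SimpleGraph

lemma indepNum_eq {V : Type*} (G : SimpleGraph V) : indepNum G = G.indepNum :=
  SimpleGraph.cliqueNum_compl

section

variable {V : Type*} [Fintype V] {G : SimpleGraph V}

lemma card_le_indepNum {s : Finset V} (hs : G.IsIndepSet s) : s.card ≤ indepNum G :=
  indepNum_eq G ▸ hs.card_le_indepNum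

variable [DecidableEq V]

lemma vertexConnectivity_le_card (S : Finset V) (hS : ¬ (G.induce (↑S : Set V)ᶜ).Connected) :
    vertexConnectivity G ≤ S.card :=
  Nat.sInf_le ⟨S, rfl, Or.inl hS⟩

lemma vertexConnectivity_le_degree [DecidableRel G.Adj] {v w : V} (hvw : v ≠ w)
    (h : ¬ G.Adj v w) : vertexConnectivity G ≤ G.degree v := by
  rw [← G.card_neighborFinset_eq_degree]
  refine vertexConnectivity_le_card _ fun hconn => ?_
  obtain ⟨p⟩ := hconn.preconnected ⟨v, by simp⟩ ⟨w, by simpa using h⟩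
  have hp : ¬ p.Nil := SimpleGraph.Walk.not_nil_of_ne (by simpa using hvw)
  exact p.snd.2 (by simpa using p.adj_snd hp)

lemma connected_of_indepNum_le_vertexConnectivity [Nonempty V]
    (h : indepNum G ≤ vertexConnectivity G) : G.Connected := by
  by_contra hG
  have hκ : vertexConnectivity G ≤ 0 := by
    refine vertexConnectivity_le_card ∅ fun hconn => hG ?_
    rw [Finset.coe_empty, Set.compl_empty] at hconn
    exact G.induceUnivIso.connected_iff.mp hconn
  obtain ⟨v⟩ := ‹Nonempty V›
  have hα : 1 ≤ indepNum G := by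
    simpa using card_le_indepNum (G := G) (s := {v}) (by simp)
  omega

lemma exists_isCycle_of_indepNum_le_vertexConnectivity (hV : 3 ≤ Fintype.card V)
    (h : indepNum G ≤ vertexConnectivity G) (hG : G.Connected) :
    ∃ (a : V) (c : G.Walk a a), c.IsCycle := by
  classical
  by_contra! hacyc
  have : Nontrivial V := Fintype.one_lt_card_iff_nontrivial.mp (by omega)
  obtain ⟨v, hv⟩ := (SimpleGraph.IsTree.mk hG hacyc).exists_vert_degree_one_of_nontrivial
  obtain ⟨w, -, hw⟩ := G.degree_eq_one_iff_existsUnique_adj.mp hv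
  obtain ⟨x, -, hx⟩ := Finset.exists_mem_notMem_of_card_lt_card (s := {v, w})
    (t := Finset.univ) (Finset.card_le_two.trans_lt (by rw [Finset.card_univ]; omega))
  simp only [Finset.mem_insert, Finset.mem_singleton, not_or] at hx
  obtain ⟨hxv, hxw⟩ : x ≠ v ∧ x ≠ w := hx
  have hvx : ¬ G.Adj v x := fun hx => hxw (hw x hx)
  have hα : 2 ≤ indepNum G := by
    have := card_le_indepNum (G := G) (s := {v, x}) (by
      rw [Finset.coe_pair]
      exact Set.pairwise_pair.mpr fun _ => ⟨hvx, fun h => hvx h.symm⟩)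
    rwa [Finset.card_pair hxv.symm] at this
  have := vertexConnectivity_le_degree hxv.symm hvx
  omega

theorem exists_longer_isCycle_of_indepNum_le_vertexConnectivity
    (h : indepNum G ≤ vertexConnectivity G) {a v : V} {c : G.Walk a a} (hc : c.IsCycle)
    (hv : v ∉ c.support) : ∃ (b : V) (c' : G.Walk b b), c'.IsCycle ∧ c.length < c'.length := by
  classical
  set N := G.attachments {x | x ∈ c.support} v
  by_contra hlong
  have hnext : ∀ u ∈ N, c.nextVert u ∉ N := fun u hu hu' =>
    hlong (hc.exists_longer_of_nextVert_mem_attachments hu hu')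
  have hnextAdj : N.Pairwise fun u u' => ¬ G.Adj (c.nextVert u) (c.nextVert u') :=
    fun u hu u' hu' huu' hadj => hlong (hc.exists_longer_of_adj_nextVert hu hu' huu' hadj)
  have hinj : Set.InjOn c.nextVert N := hc.injOn_nextVert.mono fun u hu => hu.1
  have hvN : v ∉ c.nextVert '' N := by
    rintro ⟨u, hu, rfl⟩
    exact hv (hc.nextVert_mem_support hu.1)
  -- An edge `v u⁺` would put `u⁺` into `N`.
  have hindep : G.IsIndepSet (insert v (c.nextVert '' N)) := by
    refine Set.pairwise_insert.mpr ⟨hinj.pairwise_image.mpr hnextAdj, ?_⟩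
    rintro _ ⟨u, hu, rfl⟩ -
    have hv' : ¬ G.Adj v (c.nextVert u) := fun hadj => hnext u hu
      ⟨hc.nextVert_mem_support hu.1, v, SimpleGraph.mem_reachAvoiding_self hv, hadj⟩
    exact ⟨hv', fun hadj => hv' hadj.symm⟩
  have hα : N.toFinset.card + 1 ≤ indepNum G := by
    have := card_le_indepNum (G := G) (s := insert v (N.toFinset.image c.nextVert))
      (by simpa using hindep)
    rwa [Finset.card_insert_of_notMem (by simpa using hvN),
      Finset.card_image_of_injOn (by simpa using hinj)] at this
  obtain ⟨w, hwc, hwN⟩ : ∃ w ∈ c.support, w ∉ N := by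
    by_cases ha : a ∈ N
    · exact ⟨_, hc.nextVert_mem_support c.start_mem_support, hnext a ha⟩
    · exact ⟨a, c.start_mem_support, ha⟩
  have hκ : vertexConnectivity G ≤ N.toFinset.card := vertexConnectivity_le_card _ <| by
    rw [Set.coe_toFinset]
    exact SimpleGraph.not_connected_induce_compl_attachments (K := {x | x ∈ c.support}) hv hwc hwN
  omega

end

/-- **Chvátal–Erdős theorem**: every graph on at least 3 vertices whose independence number
is at most its vertex connectivity has a Hamiltonian cycle. -/
theorem chvatal_erdos {V : Type*} [Fintype V] [DecidableEq V] (G : SimpleGraph V)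
    (hV : 3 ≤ Fintype.card V) (h : indepNum G ≤ vertexConnectivity G) :
    ∃ (a : V) (p : G.Walk a a), p.IsHamiltonianCycle := by
  have : Nonempty V := Fintype.card_pos_iff.mp (by omega)
  have hG := connected_of_indepNum_le_vertexConnectivity h
  obtain ⟨a, c, hc, hmax⟩ := SimpleGraph.exists_isCycle_forall_length_le
    (exists_isCycle_of_indepNum_le_vertexConnectivity hV h hG)
  refine ⟨a, c, hc.isHamiltonianCycle_of_forall_mem fun v => ?_⟩
  by_contra hv
  obtain ⟨b, c', hc', hlt⟩ := exists_longer_isCycle_of_indepNum_le_vertexConnectivity h hc hv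
  exact (hmax b c' hc').not_gt hlt
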